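/- arXiv:2501.04540 — 2 statements merged into one kernel-verified Lean document; each statement's English description precedes it below -/
import Mathlib

section
/- Let G be a 2-edge-connected but not 3-edge-connected undirected multigraph, and let {e1,e2} be a 2-edge-cut of G. Then the vertex set of G can be partitioned into sets V1,…,Vk such that each induced subgraph G[Vi] is 2-edge-connected (or a single vertex), and contracting each Vi to a single vertex yields a cycle; moreover e1 and e2 are edges of this cycle. -/
/-- A finite undirected multigraph: each edge `e` has two (not necessarily distinct)
endpoints `fst e` and `snd e`. -/
structure MGraph (V E : Type*) where
  fst : E → V
  snd : E → V

namespace MGraph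

variable {V E : Type*}

/-- `cut G S` is `δ(S)`, the set of edges with exactly one endpoint in `S`. -/
def cut (G : MGraph V E) (S : Set V) : Set E :=
  {e | (G.fst e ∈ S) ↔ (G.snd e ∉ S)}

/-- One step along an edge of `A`. -/
def Step (G : MGraph V E) (A : Set E) (u v : V) : Prop :=
  ∃ e ∈ A, (G.fst e = u ∧ G.snd e = v) ∨ (G.fst e = v ∧ G.snd e = u)

/-- `u` and `v` are connected using only edges from `A`. -/
def Reach (G : MGraph V E) (A : Set E) (u v : V) : Prop :=
  Relation.ReflTransGen (G.Step A) u v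

/-- The spanning subgraph `(V, A)` is connected. -/
def ConnectedOn (G : MGraph V E) (A : Set E) : Prop :=
  ∀ u v : V, G.Reach A u v

/-- The subgraph induced on the vertex set `W`, using only edges of `A` with both
endpoints in `W`, is connected. -/
def InducedConnected (G : MGraph V E) (A : Set E) (W : Set V) : Prop :=
  ∀ u ∈ W, ∀ v ∈ W, G.Reach {e | e ∈ A ∧ G.fst e ∈ W ∧ G.snd e ∈ W} u v

/-- `s` and `t` are `p`-edge-connected in the spanning subgraph `(V, A)`:
every edge cut separating them has at least `p` edges. -/
def EdgeConnected (G : MGraph V E) (A : Set E) (p : ℕ) (s t : V) : Prop :=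
  ∀ S : Set V, s ∈ S → t ∉ S → p ≤ (G.cut S ∩ A).ncard

/-- `S` separates the terminal pair `st`: exactly one of the two terminals lies in `S`. -/
def Separates (S : Set V) (st : V × V) : Prop := (st.1 ∈ S) ↔ (st.2 ∉ S)

/-- `G` is 2-edge-connected: connected, and still connected after removing any single edge. -/
def TwoEdgeConnected (G : MGraph V E) : Prop :=
  G.ConnectedOn Set.univ ∧ ∀ e : E, G.ConnectedOn {e}ᶜ

/-- `G` is 3-edge-connected: connected, and still connected after removing any two edges. -/
def ThreeEdgeConnected (G : MGraph V E) : Prop :=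
  G.ConnectedOn Set.univ ∧ ∀ e f : E, G.ConnectedOn ({e, f} : Set E)ᶜ

/-- `C` is a 2-edge-cut of a 2-edge-connected graph `G`. -/
def TwoEdgeCut (G : MGraph V E) (C : Set E) : Prop :=
  C.ncard = 2 ∧ ¬ G.ConnectedOn Cᶜ

/-- The subgraph of `G` induced on `W` is 2-edge-connected. -/
def InducedTwoEdgeConnected (G : MGraph V E) (W : Set V) : Prop :=
  G.InducedConnected Set.univ W ∧
    ∀ f : E, G.fst f ∈ W → G.snd f ∈ W → G.InducedConnected {f}ᶜ W

end MGraph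

namespace MGraph

variable {V E : Type*}

section Aux

variable {G : MGraph V E}

lemma mem_cut {S : Set V} {e : E} : e ∈ G.cut S ↔ (G.fst e ∈ S ↔ G.snd e ∉ S) := Iff.rfl

lemma mem_cut_cases {S : Set V} {e : E} : e ∈ G.cut S ↔
    ((G.fst e ∈ S ∧ G.snd e ∉ S) ∨ (G.fst e ∉ S ∧ G.snd e ∈ S)) := by
  rw [mem_cut]; tauto

lemma not_mem_cut_iff {S : Set V} {e : E} : e ∉ G.cut S ↔ (G.fst e ∈ S ↔ G.snd e ∈ S) := by
  rw [mem_cut]; tauto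

lemma step_symm {A : Set E} {u v : V} (h : G.Step A u v) : G.Step A v u := by
  obtain ⟨e, he, h⟩ := h; exact ⟨e, he, h.symm⟩

lemma reach_symm {A : Set E} {u v : V} (h : G.Reach A u v) : G.Reach A v u :=
  (@Relation.ReflTransGen.stdSymm _ _ ⟨fun _ _ h => step_symm h⟩).symm _ _ h

lemma mem_of_reach {A : Set E} {S : Set V} (hS : ∀ e ∈ A, e ∉ G.cut S) {u v : V}
    (hu : u ∈ S) (h : G.Reach A u v) : v ∈ S := by
  induction h with
  | refl => exact hu
  | tail _ step ih =>
    obtain ⟨e, he, hor⟩ := step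
    have hc := hS e he
    rw [mem_cut] at hc
    rcases hor with ⟨h1, h2⟩ | ⟨h1, h2⟩ <;> subst h1 <;> subst h2 <;> tauto

lemma not_connectedOn {A : Set E} {S : Set V} {u v : V} (hS : ∀ e ∈ A, e ∉ G.cut S)
    (hu : u ∈ S) (hv : v ∉ S) : ¬ G.ConnectedOn A :=
  fun h => hv (mem_of_reach hS hu (h u v))

lemma exists_comp {A : Set E} (h : ¬ G.ConnectedOn A) :
    ∃ (S : Set V) (u v : V), u ∈ S ∧ v ∉ S ∧ ∀ e ∈ A, e ∉ G.cut S := by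
  obtain ⟨u, v, huv⟩ : ∃ u v, ¬ G.Reach A u v := by
    by_contra hc; push_neg at hc; exact h hc
  refine ⟨{w | G.Reach A u w}, u, v, Relation.ReflTransGen.refl, huv, ?_⟩
  intro e he hecut
  rw [mem_cut] at hecut
  simp only [Set.mem_setOf_eq] at hecut
  by_cases h1 : G.Reach A u (G.fst e)
  · have h2 : G.Reach A u (G.snd e) := h1.tail ⟨e, he, Or.inl ⟨rfl, rfl⟩⟩
    tauto
  · by_cases h2 : G.Reach A u (G.snd e)
    · exact h1 (h2.tail ⟨e, he, Or.inr ⟨rfl, rfl⟩⟩)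
    · tauto

lemma cut_compl {S : Set V} : G.cut Sᶜ = G.cut S := by
  ext e; simp only [cut, Set.mem_setOf_eq, Set.mem_compl_iff]; tauto

lemma cut_symmDiff {X Y : Set V} :
    G.cut (symmDiff X Y) = symmDiff (G.cut X) (G.cut Y) := by
  ext e; simp only [cut, Set.mem_setOf_eq, Set.mem_symmDiff]; tauto

lemma cut_inter_subset {X Y : Set V} : G.cut (X ∩ Y) ⊆ G.cut X ∪ G.cut Y := by
  intro e; simp only [cut, Set.mem_setOf_eq, Set.mem_inter_iff, Set.mem_union]; tauto

lemma two_le_cut [Fintype E] (h2 : G.TwoEdgeConnected) {S : Set V} {u v : V}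
    (hu : u ∈ S) (hv : v ∉ S) : 2 ≤ (G.cut S).ncard := by
  by_contra h
  push_neg at h
  have h1 : (G.cut S).ncard ≤ 1 := by omega
  rw [Set.ncard_le_one_iff_eq] at h1
  rcases h1 with h1 | ⟨f, h1⟩
  · exact hv (mem_of_reach (fun e _ he => by rw [h1] at he; exact he) hu (h2.1 u v))
  · refine hv (mem_of_reach (A := {f}ᶜ) ?_ hu (h2.2 f u v))
    intro e he hc; rw [h1] at hc; exact he hc

/-- The set of edges forming a 2-edge-cut with `e1`, together with `e1` itself. -/
def Dset (G : MGraph V E) (e1 : E) : Set E :=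
  {f | f = e1 ∨ ¬ G.ConnectedOn ({e1, f} : Set E)ᶜ}

lemma e1_mem_Dset {e1 : E} : e1 ∈ Dset G e1 := Or.inl rfl

lemma exists_cut_pair [Fintype E] (h2 : G.TwoEdgeConnected) {e1 f : E}
    (hfe : f ≠ e1) (hf : ¬ G.ConnectedOn ({e1, f} : Set E)ᶜ) :
    ∃ S : Set V, G.cut S = {e1, f} := by
  obtain ⟨S, u, v, hu, hv, hS⟩ := exists_comp hf
  have hsub : G.cut S ⊆ {e1, f} := by
    intro e he
    by_contra hmem
    exact hS e hmem he
  have hle : ({e1, f} : Set E).ncard ≤ (G.cut S).ncard := by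
    rw [Set.ncard_pair (Ne.symm hfe)]; exact two_le_cut h2 hu hv
  exact ⟨S, Set.eq_of_subset_of_ncard_le hsub hle (Set.toFinite _)⟩

lemma dmem_of_cut {e1 f : E} {S : Set V} (h : G.cut S = {e1, f}) : f ∈ Dset G e1 := by
  right
  have he1 : e1 ∈ G.cut S := by rw [h]; left; rfl
  rw [mem_cut] at he1
  have hcp : ∀ e ∈ (({e1, f} : Set E)ᶜ), e ∉ G.cut S := by
    intro e he hc; rw [h] at hc; exact he hc
  rcases (by tauto : (G.fst e1 ∈ S ∧ G.snd e1 ∉ S) ∨ (G.fst e1 ∉ S ∧ G.snd e1 ∈ S)) with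
    ⟨ha, hb⟩ | ⟨ha, hb⟩
  · exact not_connectedOn hcp ha hb
  · exact not_connectedOn hcp hb ha

lemma cut_pair_subset_Dset {e1 f : E} {S : Set V} (h : G.cut S = {e1, f}) :
    ∀ e ∈ G.cut S, e ∈ Dset G e1 := by
  intro x hx
  rw [h] at hx
  rcases hx with rfl | rfl
  · exact e1_mem_Dset
  · exact dmem_of_cut h

lemma exists_cut_pair_norm [Fintype E] (h2 : G.TwoEdgeConnected) {e1 f : E}
    (hfe : f ≠ e1) (hf : ¬ G.ConnectedOn ({e1, f} : Set E)ᶜ) :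
    ∃ S : Set V, G.cut S = {e1, f} ∧ G.fst e1 ∈ S := by
  obtain ⟨S, hS⟩ := exists_cut_pair h2 hfe hf
  by_cases hp : G.fst e1 ∈ S
  · exact ⟨S, hS, hp⟩
  · exact ⟨Sᶜ, by rw [cut_compl]; exact hS, hp⟩

lemma not_R_of_mem_cut {e1 : E} {S : Set V} {y : E}
    (hD : ∀ e ∈ G.cut S, e ∈ Dset G e1) (hy : y ∈ G.cut S) :
    ¬ G.Reach (Dset G e1)ᶜ (G.fst y) (G.snd y) := by
  rw [mem_cut] at hy
  intro hR
  have hA : ∀ e ∈ (Dset G e1)ᶜ, e ∉ G.cut S := fun e he hc => he (hD e hc)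
  by_cases h : G.fst y ∈ S
  · exact (by tauto : G.snd y ∉ S) (mem_of_reach hA h hR)
  · exact h (mem_of_reach hA (by tauto : G.snd y ∈ S) (reach_symm hR))

/-- An edge of `Dset` always crosses the components of `G - Dset`. -/
lemma D_not_R [Fintype E] (h2 : G.TwoEdgeConnected) {e1 e2 : E} (hne : e1 ≠ e2)
    (hcut : ¬ G.ConnectedOn ({e1, e2} : Set E)ᶜ) {f : E} (hfD : f ∈ Dset G e1) :
    ¬ G.Reach (Dset G e1)ᶜ (G.fst f) (G.snd f) := by
  by_cases hfe : f = e1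
  · subst hfe
    obtain ⟨S, hS⟩ := exists_cut_pair h2 (Ne.symm hne) hcut
    exact not_R_of_mem_cut (cut_pair_subset_Dset hS) (by rw [hS]; left; rfl)
  · obtain ⟨S, hS⟩ := exists_cut_pair h2 hfe (hfD.resolve_left hfe)
    exact not_R_of_mem_cut (cut_pair_subset_Dset hS) (by rw [hS]; right; rfl)

/-- Normalized 2-cuts with `e1` form a chain. -/
lemma chain [Fintype E] (h2 : G.TwoEdgeConnected) {e1 f g : E} {Sf Sg : Set V}
    (hSf : G.cut Sf = {e1, f}) (hSg : G.cut Sg = {e1, g})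
    (hpf : G.fst e1 ∈ Sf) (hpg : G.fst e1 ∈ Sg)
    (hfg : f ≠ g) (hfe : f ≠ e1) (hge : g ≠ e1) :
    Sf ⊆ Sg ∨ Sg ⊆ Sf := by
  by_contra hcon
  push_neg at hcon
  rw [Set.not_subset] at hcon
  obtain ⟨⟨b, hbf, hbg⟩, hcon2⟩ := hcon
  rw [Set.not_subset] at hcon2
  obtain ⟨c, hcg, hcf⟩ := hcon2
  have hqf : G.snd e1 ∉ Sf := by
    have h := mem_cut.mp (show e1 ∈ G.cut Sf by rw [hSf]; left; rfl); tauto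
  have hqg : G.snd e1 ∉ Sg := by
    have h := mem_cut.mp (show e1 ∈ G.cut Sg by rw [hSg]; left; rfl); tauto
  have hBsub : G.cut (Sf ∩ Sgᶜ) ⊆ {f, g} := by
    intro x hx
    have hx2 := cut_inter_subset hx
    rw [cut_compl, hSf, hSg] at hx2
    have hxe1 : x ≠ e1 := by
      rintro rfl
      rw [mem_cut] at hx
      simp only [Set.mem_inter_iff, Set.mem_compl_iff] at hx
      tauto
    rcases hx2 with (rfl | rfl) | (rfl | rfl)
    · exact absurd rfl hxe1
    · left; rfl
    · exact absurd rfl hxe1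
    · right; rfl
  have hCsub : G.cut (Sg ∩ Sfᶜ) ⊆ {f, g} := by
    intro x hx
    have hx2 := cut_inter_subset hx
    rw [cut_compl, hSf, hSg] at hx2
    have hxe1 : x ≠ e1 := by
      rintro rfl
      rw [mem_cut] at hx
      simp only [Set.mem_inter_iff, Set.mem_compl_iff] at hx
      tauto
    rcases hx2 with (rfl | rfl) | (rfl | rfl)
    · exact absurd rfl hxe1
    · right; rfl
    · exact absurd rfl hxe1
    · left; rfl
  have hBne : b ∈ Sf ∩ Sgᶜ := ⟨hbf, hbg⟩
  have hBp : G.fst e1 ∉ Sf ∩ Sgᶜ := fun h => h.2 hpg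
  have hCne : c ∈ Sg ∩ Sfᶜ := ⟨hcg, hcf⟩
  have hCp : G.fst e1 ∉ Sg ∩ Sfᶜ := fun h => h.2 hpf
  have hB2 := two_le_cut h2 hBne hBp
  have hC2 := two_le_cut h2 hCne hCp
  have hBeq : G.cut (Sf ∩ Sgᶜ) = {f, g} :=
    Set.eq_of_subset_of_ncard_le hBsub (by rw [Set.ncard_pair hfg]; exact hB2) (Set.toFinite _)
  have hCeq : G.cut (Sg ∩ Sfᶜ) = {f, g} :=
    Set.eq_of_subset_of_ncard_le hCsub (by rw [Set.ncard_pair hfg]; exact hC2) (Set.toFinite _)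
  have hfB : f ∈ G.cut (Sf ∩ Sgᶜ) := by rw [hBeq]; left; rfl
  have hfC : f ∈ G.cut (Sg ∩ Sfᶜ) := by rw [hCeq]; left; rfl
  have hf1 : f ∈ G.cut Sf := by rw [hSf]; right; rfl
  have hf2 : f ∉ G.cut Sg := by
    rw [hSg]; rintro (rfl | rfl); exacts [hfe rfl, hfg rfl]
  rw [mem_cut] at hfB hfC hf1 hf2
  simp only [Set.mem_inter_iff, Set.mem_compl_iff] at hfB hfC
  tauto

/-- `C` is an equivalence class of reachability avoiding `Dset G e1`. -/
def IsClass (G : MGraph V E) (e1 : E) (C : Set V) : Prop :=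
  C.Nonempty ∧ ∀ a ∈ C, ∀ b, (G.Reach (Dset G e1)ᶜ a b ↔ b ∈ C)

lemma class_cut_subset_D {e1 : E} {C : Set V} (hC : IsClass G e1 C) :
    G.cut C ⊆ Dset G e1 := by
  intro e he
  by_contra hD
  rw [mem_cut] at he
  have hstep : ∀ a b : V, ((G.fst e = a ∧ G.snd e = b) ∨ (G.fst e = b ∧ G.snd e = a)) →
      G.Reach (Dset G e1)ᶜ a b := fun a b h => Relation.ReflTransGen.single ⟨e, hD, h⟩
  by_cases hf : G.fst e ∈ C
  · have := (hC.2 _ hf _).mp (hstep (G.fst e) (G.snd e) (Or.inl ⟨rfl, rfl⟩))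
    tauto
  · by_cases hs : G.snd e ∈ C
    · have := (hC.2 _ hs _).mp (hstep (G.snd e) (G.fst e) (Or.inr ⟨rfl, rfl⟩))
      tauto
    · tauto

lemma class_subset_or_disjoint {e1 : E} {C S : Set V} (hC : IsClass G e1 C)
    (hS : ∀ e ∈ G.cut S, e ∈ Dset G e1) :
    C ⊆ S ∨ ∀ a ∈ C, a ∉ S := by
  obtain ⟨a, ha⟩ := hC.1
  have hA : ∀ e ∈ (Dset G e1)ᶜ, e ∉ G.cut S := fun e he hc => he (hS e hc)
  by_cases haS : a ∈ S
  · left; intro c hc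
    exact mem_of_reach hA haS ((hC.2 a ha c).mpr hc)
  · right; intro c hc hcS
    exact haS (mem_of_reach hA hcS (reach_symm ((hC.2 a ha c).mpr hc)))

lemma class_in_diff {e1 f g : E} {Sf Sg C : Set V}
    (hSf : G.cut Sf = {e1, f}) (hSg : G.cut Sg = {e1, g})
    (hfg : f ≠ g) (hfe : f ≠ e1) (hge : g ≠ e1) (hsub : Sf ⊆ Sg)
    (hC : IsClass G e1 C) (hfC : f ∈ G.cut C) (hgC : g ∈ G.cut C) :
    C ⊆ Sg ∧ ∀ a ∈ C, a ∉ Sf := by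
  have hCg := class_subset_or_disjoint hC (cut_pair_subset_Dset hSg)
  have hCf := class_subset_or_disjoint hC (cut_pair_subset_Dset hSf)
  have hf1 : f ∈ G.cut Sf := by rw [hSf]; right; rfl
  have hf2 : f ∉ G.cut Sg := by
    rw [hSg]; rintro (rfl | rfl); exacts [hfe rfl, hfg rfl]
  have hg1 : g ∈ G.cut Sg := by rw [hSg]; right; rfl
  have hg2 : g ∉ G.cut Sf := by
    rw [hSf]; rintro (rfl | rfl); exacts [hge rfl, hfg rfl]
  have hf2' : G.fst f ∈ Sg ↔ G.snd f ∈ Sg := not_mem_cut_iff.mp hf2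
  have hg2' : G.fst g ∈ Sf ↔ G.snd g ∈ Sf := not_mem_cut_iff.mp hg2
  have hfendSg : G.fst f ∈ Sg ∧ G.snd f ∈ Sg := by
    rcases mem_cut_cases.mp hf1 with ⟨hx, _⟩ | ⟨_, hy⟩
    · exact ⟨hsub hx, hf2'.mp (hsub hx)⟩
    · exact ⟨hf2'.mpr (hsub hy), hsub hy⟩
  have hgendSf : G.fst g ∉ Sf ∧ G.snd g ∉ Sf := by
    rcases mem_cut_cases.mp hg1 with ⟨_, hy⟩ | ⟨hx, _⟩
    · have h2 : G.snd g ∉ Sf := fun h => hy (hsub h)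
      exact ⟨fun h => h2 (hg2'.mp h), h2⟩
    · have h1 : G.fst g ∉ Sf := fun h => hx (hsub h)
      exact ⟨h1, fun h => h1 (hg2'.mpr h)⟩
  constructor
  · rcases hCg with h | h
    · exact h
    · exfalso
      rcases mem_cut_cases.mp hfC with ⟨hc, _⟩ | ⟨_, hc⟩
      · exact h _ hc hfendSg.1
      · exact h _ hc hfendSg.2
  · rcases hCf with h | h
    · exfalso
      rcases mem_cut_cases.mp hgC with ⟨hc, _⟩ | ⟨_, hc⟩
      · exact hgendSf.1 (h hc)
      · exact hgendSf.2 (h hc)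
    · exact h

lemma class_cut_two_aux [Fintype E] (h2 : G.TwoEdgeConnected) {e1 f g h' : E} {C : Set V}
    {a : V} (hC : IsClass G e1 C) (ha : a ∈ C)
    (hfC : f ∈ G.cut C) (hgC : g ∈ G.cut C) (hh'C : h' ∈ G.cut C)
    (hfg : f ≠ g) (hfh : f ≠ h') (hgh : g ≠ h') (hfe : f ≠ e1) (hge : g ≠ e1)
    {Sf Sg : Set V} (hSf : G.cut Sf = {e1, f}) (hSg : G.cut Sg = {e1, g})
    (hpf : G.fst e1 ∈ Sf) (hpg : G.fst e1 ∈ Sg) (hsub : Sf ⊆ Sg) : False := by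
  obtain ⟨hCSg, hCSf⟩ := class_in_diff hSf hSg hfg hfe hge hsub hC hfC hgC
  by_cases hhe : h' = e1
  · subst hhe
    have hqSg : G.snd h' ∉ Sg := by
      have h := mem_cut.mp (show h' ∈ G.cut Sg by rw [hSg]; left; rfl); tauto
    have hp : G.fst h' ∉ C := fun h => hCSf _ h hpf
    have hq : G.snd h' ∉ C := fun h => hqSg (hCSg h)
    rcases mem_cut_cases.mp hh'C with ⟨hc, _⟩ | ⟨_, hc⟩
    · exact hp hc
    · exact hq hc
  · have hhD : h' ∈ Dset G e1 := class_cut_subset_D hC hh'C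
    obtain ⟨Sh, hSh, hph⟩ := exists_cut_pair_norm h2 hhe (hhD.resolve_left hhe)
    rcases chain h2 hSf hSh hpf hph hfh hfe hhe with hsub2 | hsub2
    · obtain ⟨hCSh, _⟩ := class_in_diff hSf hSh hfh hfe hhe hsub2 hC hfC hh'C
      rcases chain h2 hSg hSh hpg hph hgh hge hhe with hsub3 | hsub3
      · obtain ⟨_, hdis⟩ := class_in_diff hSg hSh hgh hge hhe hsub3 hC hgC hh'C
        exact hdis a ha (hCSg ha)
      · obtain ⟨_, hdis⟩ := class_in_diff hSh hSg (Ne.symm hgh) hhe hge hsub3 hC hh'C hgC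
        exact hdis a ha (hCSh ha)
    · obtain ⟨hCSf2, _⟩ := class_in_diff hSh hSf (Ne.symm hfh) hhe hfe hsub2 hC hh'C hfC
      exact hCSf a ha (hCSf2 ha)

lemma class_cut_two [Fintype E] (h2 : G.TwoEdgeConnected) {e1 e2 : E} (hne : e1 ≠ e2)
    (hcut : ¬ G.ConnectedOn ({e1, e2} : Set E)ᶜ) {C : Set V}
    (hC : IsClass G e1 C) : (G.cut C).ncard = 2 := by
  obtain ⟨a, ha⟩ := hC.1
  have hnotR : ¬ G.Reach (Dset G e1)ᶜ (G.fst e1) (G.snd e1) :=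
    D_not_R h2 hne hcut e1_mem_Dset
  have hCproper : ∃ w, w ∉ C := by
    by_contra h
    push_neg at h
    exact hnotR (Relation.ReflTransGen.trans
      (reach_symm ((hC.2 a ha _).mpr (h _))) ((hC.2 a ha _).mpr (h _)))
  obtain ⟨w, hw⟩ := hCproper
  have hge2 := two_le_cut h2 ha hw
  by_contra hne2
  have h3 : 2 < (G.cut C).ncard := lt_of_le_of_ne hge2 (Ne.symm hne2)
  rw [Set.two_lt_ncard_iff] at h3
  obtain ⟨d1, d2, d3, hd1, hd2, hd3, hd12, hd13, hd23⟩ := h3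
  obtain ⟨f, g, h', hfC, hgC, hh'C, hfg, hfh, hgh, hfe, hge⟩ :
      ∃ f g h', f ∈ G.cut C ∧ g ∈ G.cut C ∧ h' ∈ G.cut C ∧
        f ≠ g ∧ f ≠ h' ∧ g ≠ h' ∧ f ≠ e1 ∧ g ≠ e1 := by
    by_cases h1 : d1 = e1
    · exact ⟨d2, d3, d1, hd2, hd3, hd1, hd23, Ne.symm hd12, Ne.symm hd13,
        fun h => hd12 (h1.trans h.symm), fun h => hd13 (h1.trans h.symm)⟩
    · by_cases hh2 : d2 = e1
      · exact ⟨d1, d3, d2, hd1, hd3, hd2, hd13, hd12, Ne.symm hd23, h1,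
          fun h => hd23 (hh2.trans h.symm)⟩
      · exact ⟨d1, d2, d3, hd1, hd2, hd3, hd12, hd13, hd23, h1, hh2⟩
  have hfD : f ∈ Dset G e1 := class_cut_subset_D hC hfC
  have hgD : g ∈ Dset G e1 := class_cut_subset_D hC hgC
  obtain ⟨Sf, hSf, hpf⟩ := exists_cut_pair_norm h2 hfe (hfD.resolve_left hfe)
  obtain ⟨Sg, hSg, hpg⟩ := exists_cut_pair_norm h2 hge (hgD.resolve_left hge)
  rcases chain h2 hSf hSg hpf hpg hfg hfe hge with hsub | hsub
  · exact class_cut_two_aux h2 hC ha hfC hgC hh'C hfg hfh hgh hfe hge hSf hSg hpf hpg hsub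
  · exact class_cut_two_aux h2 hC ha hgC hfC hh'C (Ne.symm hfg) hgh hfh hge hfe
      hSg hSf hpg hpf hsub


set_option maxHeartbeats 1000000 in
lemma class_itec [Fintype E] (h2 : G.TwoEdgeConnected) {e1 e2 : E} (hne : e1 ≠ e2)
    (hcut : ¬ G.ConnectedOn ({e1, e2} : Set E)ᶜ) {C : Set V}
    (hC : IsClass G e1 C) : G.InducedTwoEdgeConnected C := by
  constructor
  · -- induced connectivity
    intro u hu v hv
    have hR : G.Reach (Dset G e1)ᶜ u v := (hC.2 u hu v).mpr hv
    clear hv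
    induction hR with
    | refl => exact Relation.ReflTransGen.refl
    | tail hab step ih =>
      rename_i b c
      have hb : b ∈ C := (hC.2 u hu b).mp hab
      obtain ⟨e, he, hor⟩ := step
      have hc : c ∈ C := (hC.2 b hb c).mp (Relation.ReflTransGen.single ⟨e, he, hor⟩)
      have hend : G.fst e ∈ C ∧ G.snd e ∈ C := by
        rcases hor with ⟨ha1, ha2⟩ | ⟨ha1, ha2⟩ <;> rw [ha1, ha2] <;> exact ⟨‹_›, ‹_›⟩
      exact ih.tail ⟨e, ⟨Set.mem_univ e, hend.1, hend.2⟩, hor⟩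
  · -- removing an internal edge
    intro f hf1 hf2 u hu v hv
    by_contra hcon
    set A' : Set E := {e | e ∈ ({f}ᶜ : Set E) ∧ G.fst e ∈ C ∧ G.snd e ∈ C} with hA'
    set X : Set V := {w | G.Reach A' u w} with hXdef
    have huX : u ∈ X := Relation.ReflTransGen.refl
    have hvX : v ∉ X := hcon
    have hXC : ∀ w, w ∈ X → w ∈ C := by
      intro w hw
      induction hw with
      | refl => exact hu
      | tail _ step _ =>
        obtain ⟨e, he, hor⟩ := step
        rcases hor with ⟨_, ha2⟩ | ⟨ha1, _⟩
        · rw [← ha2]; exact he.2.2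
        · rw [← ha1]; exact he.2.1
    have hstepX : ∀ e ∈ A', (G.fst e ∈ X ↔ G.snd e ∈ X) := by
      intro e he
      constructor
      · intro h; exact h.tail ⟨e, he, Or.inl ⟨rfl, rfl⟩⟩
      · intro h; exact h.tail ⟨e, he, Or.inr ⟨rfl, rfl⟩⟩
    have hcutX : ∀ e ∈ G.cut X, e = f ∨ e ∈ G.cut C := by
      intro e he
      by_cases hef : e = f
      · exact Or.inl hef
      right
      by_cases hint : G.fst e ∈ C ∧ G.snd e ∈ C
      · exact absurd (hstepX e ⟨hef, hint.1, hint.2⟩) (fun hh => (not_mem_cut_iff.mpr hh) he)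
      · rw [mem_cut_cases] at he ⊢
        have hfx := hXC (G.fst e)
        have hsx := hXC (G.snd e)
        tauto
    set Y : Set V := {w | w ∈ C ∧ w ∉ X} with hYdef
    have hcutY : ∀ e ∈ G.cut Y, e = f ∨ e ∈ G.cut C := by
      intro e he
      by_cases hef : e = f
      · exact Or.inl hef
      right
      by_cases hint : G.fst e ∈ C ∧ G.snd e ∈ C
      · exfalso
        have hx := hstepX e ⟨hef, hint.1, hint.2⟩
        rw [mem_cut_cases] at he
        simp only [hYdef, Set.mem_setOf_eq] at he
        tauto
      · rw [mem_cut_cases] at he ⊢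
        simp only [hYdef, Set.mem_setOf_eq] at he
        have hfx := hXC (G.fst e)
        have hsx := hXC (G.snd e)
        tauto
    have hC2 := class_cut_two h2 hne hcut hC
    obtain ⟨d1, d2, hd12, hdC⟩ := Set.ncard_eq_two.mp hC2
    have hd1C : d1 ∈ G.cut C := by rw [hdC]; left; rfl
    have hd2C : d2 ∈ G.cut C := by rw [hdC]; right; rfl
    have hfC : f ∉ G.cut C := not_mem_cut_iff.mpr (iff_of_true hf1 hf2)
    have hdX : ∀ d, d ∈ G.cut C → (d ∈ G.cut X ↔ d ∉ G.cut Y) := by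
      intro d hd
      have h1 := hXC (G.fst d)
      have h2 := hXC (G.snd d)
      rw [mem_cut_cases] at hd
      rw [mem_cut_cases, mem_cut_cases]
      simp only [hYdef, Set.mem_setOf_eq]
      tauto
    have hfXY : f ∈ G.cut X ↔ f ∈ G.cut Y := by
      rw [mem_cut_cases, mem_cut_cases]
      simp only [hYdef, Set.mem_setOf_eq]
      tauto
    have h2X : 2 ≤ (G.cut X).ncard := two_le_cut h2 huX hvX
    have hvY : v ∈ Y := ⟨hv, hvX⟩
    have huY : u ∉ Y := fun h => h.2 huX
    have h2Y : 2 ≤ (G.cut Y).ncard := two_le_cut h2 hvY huY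
    by_cases hfX : f ∈ G.cut X
    · have hd1or : d1 ∈ G.cut X ∨ d2 ∈ G.cut X := by
        by_contra hno
        push_neg at hno
        have hsub : G.cut X ⊆ {f} := by
          intro x hx
          rcases hcutX x hx with rfl | hxC
          · rfl
          · rw [hdC] at hxC
            rcases hxC with rfl | rfl
            · exact absurd hx hno.1
            · exact absurd hx hno.2
        have := Set.ncard_le_ncard hsub (Set.toFinite _)
        rw [Set.ncard_singleton] at this
        omega
      have hnotboth : ¬ (d1 ∈ G.cut X ∧ d2 ∈ G.cut X) := by
        rintro ⟨ha1, ha2⟩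
        have h1' := (hdX d1 hd1C).mp ha1
        have h2' := (hdX d2 hd2C).mp ha2
        have hfY : f ∈ G.cut Y := hfXY.mp hfX
        have hsub : G.cut Y ⊆ {f} := by
          intro x hx
          rcases hcutY x hx with rfl | hxC
          · rfl
          · rw [hdC] at hxC
            rcases hxC with rfl | rfl
            · exact absurd hx h1'
            · exact absurd hx h2'
        have := Set.ncard_le_ncard hsub (Set.toFinite _)
        rw [Set.ncard_singleton] at this
        omega
      obtain ⟨d, hdCC, hdX'⟩ : ∃ d, d ∈ G.cut C ∧ G.cut X = {f, d} := by
        rcases hd1or with h | h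
        · refine ⟨d1, hd1C, Set.Subset.antisymm ?_ ?_⟩
          · intro x hx
            rcases hcutX x hx with rfl | hxC
            · left; rfl
            · rw [hdC] at hxC
              rcases hxC with rfl | rfl
              · right; rfl
              · exact absurd hx (fun hh => hnotboth ⟨h, hh⟩)
          · rintro x (rfl | rfl)
            · exact hfX
            · exact h
        · refine ⟨d2, hd2C, Set.Subset.antisymm ?_ ?_⟩
          · intro x hx
            rcases hcutX x hx with rfl | hxC
            · left; rfl
            · rw [hdC] at hxC
              rcases hxC with rfl | rfl
              · exact absurd hx (fun hh => hnotboth ⟨hh, h⟩)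
              · right; rfl
          · rintro x (rfl | rfl)
            · exact hfX
            · exact h
      have hRf : G.Reach (Dset G e1)ᶜ (G.fst f) (G.snd f) := (hC.2 _ hf1 _).mpr hf2
      have hfD : f ∉ Dset G e1 := fun h => D_not_R h2 hne hcut h hRf
      have hdD : d ∈ Dset G e1 := class_cut_subset_D hC hdCC
      have hfne1 : f ≠ e1 := by rintro rfl; exact hfD e1_mem_Dset
      have hfnd : f ≠ d := by rintro rfl; exact hfD hdD
      apply hfD
      by_cases hde1 : d = e1
      · subst hde1
        right
        refine not_connectedOn (S := X) ?_ huX hvX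
        intro e' he' hc
        rw [hdX'] at hc
        rcases hc with rfl | rfl
        · exact he' (Or.inr rfl)
        · exact he' (Or.inl rfl)
      · obtain ⟨Sd, hSd⟩ := exists_cut_pair h2 hde1 (hdD.resolve_left hde1)
        right
        have hTcut : G.cut (symmDiff X Sd) = {e1, f} := by
          rw [cut_symmDiff, hdX', hSd]
          ext x
          simp only [Set.mem_symmDiff, Set.mem_insert_iff, Set.mem_singleton_iff]
          constructor
          · rintro (⟨ha1, ha2⟩ | ⟨ha1, ha2⟩)
            · rcases ha1 with rfl | rfl
              · exact Or.inr rfl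
              · exact absurd (Or.inr rfl) ha2
            · rcases ha1 with rfl | rfl
              · exact Or.inl rfl
              · exact absurd (Or.inr rfl) ha2
          · rintro (rfl | rfl)
            · exact Or.inr ⟨Or.inl rfl, fun h => h.elim (fun h' => hfne1 h'.symm)
                (fun h' => hde1 h'.symm)⟩
            · exact Or.inl ⟨Or.inl rfl, fun h => h.elim hfne1 hfnd⟩
        have he1T := mem_cut_cases.mp (show e1 ∈ G.cut (symmDiff X Sd) by
          rw [hTcut]; left; rfl)
        have hall : ∀ e' ∈ (({e1, f} : Set E)ᶜ), e' ∉ G.cut (symmDiff X Sd) := by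
          intro e' he' hc
          rw [hTcut] at hc
          rcases hc with rfl | rfl
          · exact he' (Or.inl rfl)
          · exact he' (Or.inr rfl)
        rcases he1T with ⟨ht1, ht2⟩ | ⟨ht1, ht2⟩
        · exact not_connectedOn hall ht1 ht2
        · exact not_connectedOn hall ht2 ht1
    · have hfY : f ∉ G.cut Y := fun h => hfX (hfXY.mpr h)
      have hXsub : G.cut X ⊆ {d1, d2} := by
        intro x hx
        rcases hcutX x hx with rfl | hxC
        · exact absurd hx hfX
        · rw [hdC] at hxC; exact hxC
      have hYsub : G.cut Y ⊆ {d1, d2} := by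
        intro x hx
        rcases hcutY x hx with rfl | hxC
        · exact absurd hx hfY
        · rw [hdC] at hxC; exact hxC
      have hXeq : G.cut X = {d1, d2} :=
        Set.eq_of_subset_of_ncard_le hXsub (by rw [Set.ncard_pair hd12]; exact h2X)
          (Set.toFinite _)
      have hYeq : G.cut Y = {d1, d2} :=
        Set.eq_of_subset_of_ncard_le hYsub (by rw [Set.ncard_pair hd12]; exact h2Y)
          (Set.toFinite _)
      exact ((hdX d1 hd1C).mp (by rw [hXeq]; left; rfl)) (by rw [hYeq]; left; rfl)

end Aux

end MGraph


/-- cycle decomposition along a 2-edge-cut.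
If `G` is 2-edge-connected but not 3-edge-connected and `{e1,e2}` is a 2-edge-cut,
then `V` can be partitioned into classes (given by `part`) such that each class induces
a 2-edge-connected subgraph or a single vertex, the quotient obtained by contracting the
classes is a cycle (connected and every quotient vertex has degree exactly 2, counting
only crossing edges), and `e1, e2` are edges of this cycle (i.e. crossing edges). -/
theorem stmt2 {V E : Type*} [Fintype V] [Fintype E] (G : MGraph V E)
    (h2 : G.TwoEdgeConnected) (h3 : ¬ G.ThreeEdgeConnected)
    (e1 e2 : E) (hne : e1 ≠ e2) (hcut : ¬ G.ConnectedOn ({e1, e2} : Set E)ᶜ) :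
    ∃ (k : ℕ) (part : V → Fin k), Function.Surjective part ∧
      (∀ i : Fin k, (∃ v, part ⁻¹' {i} = {v}) ∨
        G.InducedTwoEdgeConnected (part ⁻¹' {i})) ∧
      (∀ a b : Fin k, Relation.ReflTransGen
        (fun x y : Fin k => ∃ e : E, part (G.fst e) ≠ part (G.snd e) ∧
          ((part (G.fst e) = x ∧ part (G.snd e) = y) ∨
           (part (G.fst e) = y ∧ part (G.snd e) = x))) a b) ∧
      (∀ i : Fin k,
        ({e : E | part (G.fst e) ≠ part (G.snd e) ∧ part (G.fst e) = i}).ncard +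
        ({e : E | part (G.fst e) ≠ part (G.snd e) ∧ part (G.snd e) = i}).ncard = 2) ∧
      part (G.fst e1) ≠ part (G.snd e1) ∧ part (G.fst e2) ≠ part (G.snd e2) := by
  classical
  let s : Setoid V := ⟨G.Reach (MGraph.Dset G e1)ᶜ,
    ⟨fun _ => Relation.ReflTransGen.refl, fun h => MGraph.reach_symm h,
      fun h1 h2 => Relation.ReflTransGen.trans h1 h2⟩⟩
  letI : Fintype (Quotient s) := Quotient.fintype s
  let k := Fintype.card (Quotient s)
  let eqv : Quotient s ≃ Fin k := Fintype.equivFin (Quotient s)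
  let part : V → Fin k := fun v => eqv (Quotient.mk s v)
  have hpart : ∀ u w : V, part u = part w ↔ G.Reach (MGraph.Dset G e1)ᶜ u w := by
    intro u w
    constructor
    · intro h
      exact Quotient.exact (eqv.injective h)
    · intro h
      exact congrArg eqv (Quotient.sound h)
  have hsurj : Function.Surjective part := by
    intro i
    refine ⟨(eqv.symm i).out, ?_⟩
    show eqv (Quotient.mk s (eqv.symm i).out) = i
    rw [Quotient.out_eq]
    exact eqv.apply_symm_apply i
  have hclass : ∀ i : Fin k, MGraph.IsClass G e1 (part ⁻¹' {i}) := by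
    intro i
    obtain ⟨w0, hw0⟩ := hsurj i
    refine ⟨⟨w0, hw0⟩, ?_⟩
    intro a ha b
    have hai : part a = i := ha
    constructor
    · intro h
      show part b = i
      rw [← hai]
      exact ((hpart a b).mpr h).symm
    · intro hb
      exact (hpart a b).mp (hai.trans (Set.mem_singleton_iff.mp hb).symm)
  refine ⟨k, part, hsurj, ?_, ?_, ?_, ?_, ?_⟩
  · intro i
    exact Or.inr (MGraph.class_itec h2 hne hcut (hclass i))
  · intro a b
    obtain ⟨va, hva⟩ := hsurj a
    obtain ⟨vb, hvb⟩ := hsurj b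
    have key : ∀ u w : V, G.Reach Set.univ u w → Relation.ReflTransGen
        (fun x y : Fin k => ∃ e : E, part (G.fst e) ≠ part (G.snd e) ∧
          ((part (G.fst e) = x ∧ part (G.snd e) = y) ∨
           (part (G.fst e) = y ∧ part (G.snd e) = x))) (part u) (part w) := by
      intro u w h
      induction h with
      | refl => exact Relation.ReflTransGen.refl
      | tail _ step ih =>
        rename_i b' c' _
        obtain ⟨e, _, hor⟩ := step
        by_cases hbc : part b' = part c'
        · exact hbc ▸ ih
        · refine ih.tail ⟨e, ?_, ?_⟩
          · rcases hor with ⟨ha1, ha2⟩ | ⟨ha1, ha2⟩ <;> rw [ha1, ha2]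
            · exact hbc
            · exact fun h => hbc h.symm
          · rcases hor with ⟨ha1, ha2⟩ | ⟨ha1, ha2⟩
            · exact Or.inl ⟨congrArg part ha1, congrArg part ha2⟩
            · exact Or.inr ⟨congrArg part ha1, congrArg part ha2⟩
    rw [← hva, ← hvb]
    exact key va vb (h2.1 va vb)
  · intro i
    have hCc := MGraph.class_cut_two h2 hne hcut (hclass i)
    have hU : {e : E | part (G.fst e) ≠ part (G.snd e) ∧ part (G.fst e) = i} ∪
              {e : E | part (G.fst e) ≠ part (G.snd e) ∧ part (G.snd e) = i} =
              G.cut (part ⁻¹' {i}) := by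
      ext x
      simp only [Set.mem_union, Set.mem_setOf_eq, MGraph.mem_cut, Set.mem_preimage,
        Set.mem_singleton_iff]
      constructor
      · rintro (⟨hne', hi⟩ | ⟨hne', hi⟩)
        · exact ⟨fun _ h => hne' (hi.trans h.symm), fun _ => hi⟩
        · exact ⟨fun h hh => hne' (h.trans hi.symm) |>.elim, fun h => absurd hi h⟩
      · intro hx
        by_cases h1 : part (G.fst x) = i
        · exact Or.inl ⟨fun hh => (hx.mp h1) (hh ▸ h1), h1⟩
        · have h2' : part (G.snd x) = i := by
            by_contra hc
            exact h1 (hx.mpr hc)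
          exact Or.inr ⟨fun hh => h1 (hh.trans h2'), h2'⟩
    have hdisj : Disjoint {e : E | part (G.fst e) ≠ part (G.snd e) ∧ part (G.fst e) = i}
        {e : E | part (G.fst e) ≠ part (G.snd e) ∧ part (G.snd e) = i} := by
      rw [Set.disjoint_left]
      rintro x ⟨hc, hx1⟩ ⟨_, hx2⟩
      exact hc (hx1.trans hx2.symm)
    rw [← Set.ncard_union_eq hdisj (Set.toFinite _) (Set.toFinite _), hU]
    exact hCc
  · exact fun h => MGraph.D_not_R h2 hne hcut MGraph.e1_mem_Dset ((hpart _ _).mp h)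
  · exact fun h => MGraph.D_not_R h2 hne hcut (Or.inr hcut) ((hpart _ _).mp h)
end

section
/- Let G=(V,E) be a finite connected undirected multigraph and let X ⊆ E be such that (V,X) has t ≥ 2 connected components S_1,…,S_t. If every edge cut of G avoiding X has size at least k (i.e., every δ(S) with δ(S) ∩ X = ∅ satisfies |δ(S)| ≥ k), then G contains a bond of size at least k. -/
namespace MGraph

variable {V E : Type*}

lemma reach_cross (G : MGraph V E) (A : Set E) (W : Set V) {a b : V}
    (h : G.Reach A a b) (ha : a ∈ W) : b ∉ W → ∃ e ∈ A, e ∈ G.cut W := by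
  induction h with
  | refl => exact fun hb => absurd ha hb
  | @tail c d h1 h2 ih =>
    intro hb
    by_cases hc : c ∈ W
    · obtain ⟨e, heA, hor⟩ := h2
      refine ⟨e, heA, ?_⟩
      rcases hor with ⟨h3, h4⟩ | ⟨h3, h4⟩
      · show G.fst e ∈ W ↔ G.snd e ∉ W
        rw [h3, h4]; exact iff_of_true hc hb
      · show G.fst e ∈ W ↔ G.snd e ∉ W
        rw [h3, h4]; exact iff_of_false hb (not_not_intro hc)
    · exact ih hc

lemma cut_component_subset (G : MGraph V E) (W : Set V) (u : V) :
    G.cut {w | w ∈ W ∧ G.Reach {e | e ∈ (Set.univ : Set E) ∧ G.fst e ∈ W ∧ G.snd e ∈ W} u w}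
      ⊆ G.cut W := by
  set A : Set E := {e | e ∈ (Set.univ : Set E) ∧ G.fst e ∈ W ∧ G.snd e ∈ W} with hA
  set T : Set V := {w | w ∈ W ∧ G.Reach A u w} with hT
  intro e he
  have he' : (G.fst e ∈ T) ↔ (G.snd e ∉ T) := he
  by_cases h1 : G.fst e ∈ W <;> by_cases h2 : G.snd e ∈ W
  · exfalso
    have hin : e ∈ A := ⟨trivial, h1, h2⟩
    by_cases hf : G.fst e ∈ T
    · exact (he'.mp hf) ⟨h2, hf.2.tail ⟨e, hin, Or.inl ⟨rfl, rfl⟩⟩⟩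
    · have hs : G.snd e ∈ T := not_not.mp fun hs => hf (he'.mpr hs)
      exact hf ⟨h1, hs.2.tail ⟨e, hin, Or.inr ⟨rfl, rfl⟩⟩⟩
  · exact iff_of_true h1 h2
  · exact iff_of_false h1 (not_not_intro h2)
  · exfalso
    have hf : G.fst e ∉ T := fun h => h1 h.1
    have hs : G.snd e ∉ T := fun h => h2 h.1
    exact hf (he'.mpr hs)

lemma cut_compl_s10 (G : MGraph V E) (W : Set V) : G.cut Wᶜ = G.cut W := by
  ext e
  simp only [cut, Set.mem_setOf_eq, Set.mem_compl_iff]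
  tauto

end MGraph

lemma lex_aux {N c1 n1 c2 n2 : ℕ} (h : c1 * (N+1) + n1 ≤ c2 * (N+1) + n2) (hn2 : n2 ≤ N) :
    c1 ≤ c2 := by
  by_contra hc
  push_neg at hc
  have h2 : c2 + 1 ≤ c1 := hc
  nlinarith


/-- if `(V,X)` has at least two connected components and every edge
cut of the connected multigraph `G` avoiding `X` has at least `k` edges, then `G` has a
bond of size at least `k`. -/
theorem stmt10 {V E : Type*} [Fintype V] [Fintype E] (G : MGraph V E)
    (hconn : G.ConnectedOn Set.univ) (k : ℕ) (X : Set E)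
    (hdisc : ∃ u v : V, ¬ G.Reach X u v)
    (hcuts : ∀ S : Set V, S.Nonempty → Sᶜ.Nonempty → G.cut S ∩ X = ∅ →
      k ≤ (G.cut S).ncard) :
    ∃ S : Set V, S.Nonempty ∧ Sᶜ.Nonempty ∧
      G.InducedConnected Set.univ S ∧ G.InducedConnected Set.univ Sᶜ ∧
      k ≤ (G.cut S).ncard := by
  classical
  obtain ⟨u0, w0, huw⟩ := hdisc
  set N := Fintype.card V with hN
  have hcardle : ∀ S : Set V, S.ncard ≤ N := by
    intro S
    have := Set.ncard_le_ncard (Set.subset_univ S) Set.finite_univ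
    rwa [Set.ncard_univ, Nat.card_eq_fintype_card] at this
  set F : Set (Set V) := {S | S.Nonempty ∧ Sᶜ.Nonempty ∧ G.cut S ∩ X = ∅} with hF
  have hS0 : {v | G.Reach X u0 v} ∈ F := by
    refine ⟨⟨u0, Relation.ReflTransGen.refl⟩, ⟨w0, huw⟩, ?_⟩
    ext e
    simp only [Set.mem_inter_iff, Set.mem_empty_iff_false, iff_false, not_and]
    intro he heX
    have he' : (G.fst e ∈ {v | G.Reach X u0 v}) ↔ (G.snd e ∉ {v | G.Reach X u0 v}) := he
    by_cases hf : G.Reach X u0 (G.fst e)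
    · exact (he'.mp hf) (hf.tail ⟨e, heX, Or.inl ⟨rfl, rfl⟩⟩)
    · have hs : G.Reach X u0 (G.snd e) := not_not.mp fun hs => hf (he'.mpr hs)
      exact hf (hs.tail ⟨e, heX, Or.inr ⟨rfl, rfl⟩⟩)
  obtain ⟨S, hSF, hmin⟩ := Set.exists_min_image F
    (fun S => (G.cut S).ncard * (N+1) + S.ncard) (Set.toFinite F) ⟨_, hS0⟩
  obtain ⟨hSne, hScne, hSX⟩ := hSF
  have hcutmin : ∀ T ∈ F, (G.cut S).ncard ≤ (G.cut T).ncard := fun T hT =>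
    lex_aux (hmin T hT) (hcardle T)
  have hsizemin : ∀ T ∈ F, (G.cut T).ncard ≤ (G.cut S).ncard → S.ncard ≤ T.ncard := by
    intro T hT hle
    have hc : (G.cut S).ncard = (G.cut T).ncard := le_antisymm (hcutmin T hT) hle
    have h := hmin T hT
    rw [hc] at h
    exact Nat.le_of_add_le_add_left h
  have hXsub : ∀ T : Set V, G.cut T ⊆ G.cut S → G.cut T ∩ X = ∅ := by
    intro T hsub
    have h : G.cut T ∩ X ⊆ G.cut S ∩ X := Set.inter_subset_inter_left X hsub
    rw [hSX] at h
    exact Set.subset_empty_iff.mp h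
  have hindS : G.InducedConnected Set.univ S := by
    intro u hu v hv
    by_contra hR
    set T : Set V :=
      {w | w ∈ S ∧ G.Reach {e | e ∈ (Set.univ : Set E) ∧ G.fst e ∈ S ∧ G.snd e ∈ S} u w}
      with hTdef
    have hsub : G.cut T ⊆ G.cut S := G.cut_component_subset S u
    have hvT : v ∉ T := fun h => hR h.2
    have hTF : T ∈ F := ⟨⟨u, hu, Relation.ReflTransGen.refl⟩, ⟨v, hvT⟩, hXsub T hsub⟩
    have h1 : (G.cut T).ncard ≤ (G.cut S).ncard := Set.ncard_le_ncard hsub (Set.toFinite _)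
    have h2 : S.ncard ≤ T.ncard := hsizemin T hTF h1
    have h3 : T ⊂ S := (Set.ssubset_iff_of_subset (fun w hw => hw.1)).mpr ⟨v, hv, hvT⟩
    exact absurd h2 (not_le.mpr (Set.ncard_lt_ncard h3 (Set.toFinite S)))
  have hindSc : G.InducedConnected Set.univ Sᶜ := by
    intro u hu v hv
    by_contra hR
    set T : Set V :=
      {w | w ∈ Sᶜ ∧ G.Reach {e | e ∈ (Set.univ : Set E) ∧ G.fst e ∈ Sᶜ ∧ G.snd e ∈ Sᶜ} u w}
      with hTdef
    have hsub : G.cut T ⊆ G.cut S := by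
      rw [← G.cut_compl_s10 S]
      exact G.cut_component_subset Sᶜ u
    have hvT : v ∉ T := fun h => hR h.2
    have hTS : T ⊆ Sᶜ := fun w hw => hw.1
    have hTF : T ∈ F := by
      refine ⟨⟨u, hu, Relation.ReflTransGen.refl⟩, ?_, hXsub T hsub⟩
      obtain ⟨s0, hs0⟩ := hSne
      exact ⟨s0, fun h => (hTS h) hs0⟩
    have heq : G.cut T = G.cut S :=
      Set.eq_of_subset_of_ncard_le hsub (hcutmin T hTF) (Set.toFinite _)
    obtain ⟨s0, hs0⟩ := hSne
    have hvST : v ∉ S ∪ T := fun h => h.elim (fun h' => hv h') hvT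
    obtain ⟨e, -, hecut⟩ := G.reach_cross Set.univ (S ∪ T) (hconn s0 v) (Or.inl hs0) hvST
    have hiff : (G.fst e ∈ S ∪ T) ↔ (G.snd e ∉ S ∪ T) := hecut
    by_cases hf : G.fst e ∈ S ∪ T
    · have hsn : G.snd e ∉ S ∪ T := hiff.mp hf
      have hsnS : G.snd e ∉ S := fun h => hsn (Or.inl h)
      have hsnT : G.snd e ∉ T := fun h => hsn (Or.inr h)
      rcases hf with hfS | hfT
      · have h1 : e ∈ G.cut S := iff_of_true hfS hsnS
        rw [← heq] at h1
        have h2 : (G.fst e ∈ T) ↔ (G.snd e ∉ T) := h1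
        exact (hTS (h2.mpr hsnT)) hfS
      · have h1 : e ∈ G.cut T := iff_of_true hfT hsnT
        rw [heq] at h1
        have h2 : (G.fst e ∈ S) ↔ (G.snd e ∉ S) := h1
        exact (hTS hfT) (h2.mpr hsnS)
    · have hsn : G.snd e ∈ S ∪ T := not_not.mp fun h => hf (hiff.mpr h)
      have hfS : G.fst e ∉ S := fun h => hf (Or.inl h)
      have hfT : G.fst e ∉ T := fun h => hf (Or.inr h)
      rcases hsn with hsS | hsT
      · have h1 : e ∈ G.cut S := iff_of_false hfS (not_not_intro hsS)
        rw [← heq] at h1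
        have h2 : (G.fst e ∈ T) ↔ (G.snd e ∉ T) := h1
        have h3 : G.snd e ∈ T := not_not.mp fun h => hfT (h2.mpr h)
        exact (hTS h3) hsS
      · have h1 : e ∈ G.cut T := iff_of_false hfT (not_not_intro hsT)
        rw [heq] at h1
        have h2 : (G.fst e ∈ S) ↔ (G.snd e ∉ S) := h1
        have h3 : G.snd e ∈ S := not_not.mp fun h => hfS (h2.mpr h)
        exact (hTS hsT) h3
  exact ⟨S, hSne, hScne, hindS, hindSc, hcuts S hSne hScne hSX⟩
end
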